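/- There is no perfect coloring of H with parameter matrix [[1,2,0],[1,0,2],[0,2,1]] (the array [12-102-21] is infeasible). -/

import Mathlib

/-!
Row 0 of the matrix gives every vertex of colour 0 exactly one neighbour of colour 0, and rows
1 and 2 put every vertex within distance two of colour 0, so it suffices to rule out an edge
with both ends of colour 0. Around such an edge the neighbour counts force the colours along the
hexagons at its ends, until a vertex of colour 1 would get a neighbour of colour 1, which row 1
forbids. Only the relations `a² = b² = c² = 1`, `abc = cba` enter, and they are invariant under
rotating `(a, b, c)`, which moves the 0–0 edge into the direction of `a`.
-/

namespace HexGrid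

/-- Relations of the hexagonal grid group: x² = y² = z² = (x·y·z)² = 1. -/
def hexRels : Set (FreeGroup (Fin 3)) :=
  {FreeGroup.of 0 * FreeGroup.of 0,
   FreeGroup.of 1 * FreeGroup.of 1,
   FreeGroup.of 2 * FreeGroup.of 2,
   FreeGroup.of 0 * FreeGroup.of 1 * FreeGroup.of 2 *
     (FreeGroup.of 0 * FreeGroup.of 1 * FreeGroup.of 2)}

/-- The group `G = ⟨x, y, z ∣ x² = y² = z² = (x·y·z)² = 1⟩`. -/
abbrev G := PresentedGroup hexRels

/-- The generators of `G`. -/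
def gen (i : Fin 3) : G := PresentedGroup.of i

def x : G := gen 0
def y : G := gen 1
def z : G := gen 2

lemma gen_mul_self (i : Fin 3) : gen i * gen i = 1 := by
  have h : FreeGroup.of i * FreeGroup.of i ∈ Subgroup.normalClosure hexRels :=
    Subgroup.subset_normalClosure (by fin_cases i <;> simp [hexRels])
  exact (QuotientGroup.eq_one_iff _).mpr h

/-- The infinite hexagonal grid `H`: the Cayley graph of `G` with respect to `{x, y, z}`;
`u` and `v` are adjacent iff `v ∈ {u·x, u·y, u·z}`. -/
def H : SimpleGraph G where
  Adj u v := u ≠ v ∧ ∃ i : Fin 3, v = u * gen i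
  symm := by
    constructor
    rintro u v ⟨hne, i, rfl⟩
    exact ⟨hne.symm, i, by rw [mul_assoc, gen_mul_self, mul_one]⟩
  loopless := by constructor; rintro u ⟨hne, -⟩; exact hne rfl

/-- `φ` is a perfect coloring of `H` with parameter matrix `A`: for every vertex `u` and
every color `j`, the number of neighbors of `u` in `H` colored `j` equals `A (φ u) j`. -/
def IsPerfectColoring {k : ℕ} (φ : G → Fin k) (A : Matrix (Fin k) (Fin k) ℕ) : Prop :=
  ∀ u : G, ∀ j : Fin k, Set.ncard {v : G | H.Adj u v ∧ φ v = j} = A (φ u) j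

/-- A matrix is tridiagonal if its entries vanish whenever the indices differ by more
than one. -/
def IsTridiagonal {k : ℕ} (A : Matrix (Fin k) (Fin k) ℕ) : Prop :=
  ∀ i j : Fin k, ((i : ℕ) + 1 < (j : ℕ) ∨ (j : ℕ) + 1 < (i : ℕ)) → A i j = 0

/-- Two colorings are equivalent if one is obtained from the other by composing with a
graph automorphism of `H`. -/
def EquivColoring {k : ℕ} (φ ψ : G → Fin k) : Prop :=
  ∃ g : H ≃g H, ψ = fun v => φ (g v)

def nbrColors : Fin 3 → Multiset (Fin 3) := ![{0, 1, 1}, {0, 2, 2}, {1, 1, 2}]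

theorem count_nbrColors (c j : Fin 3) :
    (nbrColors c).count j = !![1,2,0;1,0,2;0,2,1] c j := by
  fin_cases c <;> fin_cases j <;> rfl

section

variable {c p q r : Fin 3}

theorem nbrColors_zero_of_left_eq_zero (h : {0, q, r} = nbrColors 0) : q = 1 ∧ r = 1 := by
  revert q r; decide

theorem nbrColors_one_of_mid_eq_zero (h : {p, 0, r} = nbrColors 1) : p = 2 ∧ r = 2 := by
  revert p r; decide

theorem nbrColors_one_of_right_eq_zero (h : {p, q, 0} = nbrColors 1) : p = 2 ∧ q = 2 := by
  revert p q; decide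

theorem nbrColors_two_of_left_eq_two (h : {2, q, r} = nbrColors 2) : q = 1 ∧ r = 1 := by
  revert q r; decide

theorem nbrColors_two_of_mid_eq_two (h : {p, 2, r} = nbrColors 2) : p = 1 ∧ r = 1 := by
  revert p r; decide

theorem nbrColors_two_of_left_right_eq_one (h : {1, q, 1} = nbrColors 2) : q = 2 := by
  revert q; decide

theorem eq_one_of_nbrColors_mid_right_eq_two (h : {p, 2, 2} = nbrColors c) : c = 1 := by
  revert c p; decide

theorem nbrColors_one_ne_of_left_eq_one : {1, q, r} ≠ nbrColors 1 := by
  revert q r; decide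

end

section

variable {Γ : Type*} [Group Γ]

/-- The defining relations of `G`; for involutions, `a * b * c = c * b * a` is
`(a * b * c) ^ 2 = 1`. -/
structure SatisfiesHexRels (a b c : Γ) : Prop where
  mul_self_left : a * a = 1
  mul_self_mid : b * b = 1
  mul_self_right : c * c = 1
  mul_mul_comm : a * b * c = c * b * a

theorem mul_mul_cancel_of_mul_self {a : Γ} (ha : a * a = 1) (w : Γ) : w * a * a = w := by
  rw [mul_assoc, ha, mul_one]

theorem SatisfiesHexRels.rotate {a b c : Γ} (h : SatisfiesHexRels a b c) :
    SatisfiesHexRels b c a where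
  mul_self_left := h.mul_self_mid
  mul_self_mid := h.mul_self_right
  mul_self_right := h.mul_self_left
  mul_mul_comm :=
    calc b * c * a = a * (a * b * c) * a := by
          simp only [← mul_assoc, h.mul_self_left, one_mul]
      _ = a * c * b := by
          rw [h.mul_mul_comm]; simp only [mul_assoc, h.mul_self_left, mul_one]

/-- `f` is a perfect colouring with matrix `[[1,2,0],[1,0,2],[0,2,1]]` of the Cayley graph of
`Γ` with respect to `a, b, c`. -/
def IsNbrColoring (f : Γ → Fin 3) (a b c : Γ) : Prop :=
  ∀ u, ({f (u * a), f (u * b), f (u * c)} : Multiset (Fin 3)) = nbrColors (f u)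

variable {f : Γ → Fin 3} {a b c : Γ}

theorem IsNbrColoring.rotate (hf : IsNbrColoring f a b c) : IsNbrColoring f b c a := by
  intro u
  rw [← hf u]
  show _ ::ₘ _ ::ₘ _ ::ₘ 0 = _ ::ₘ _ ::ₘ _ ::ₘ 0
  rw [Multiset.cons_swap (f (u * c)), Multiset.cons_swap (f (u * b))]

theorem IsNbrColoring.exists_nbr_eq (hf : IsNbrColoring f a b c) {u : Γ} {d : Fin 3}
    (hd : d ∈ nbrColors (f u)) : f (u * a) = d ∨ f (u * b) = d ∨ f (u * c) = d := by
  rw [← hf u] at hd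
  simpa [eq_comm] using hd

theorem IsNbrColoring.colors_around_zero_edge (hf : IsNbrColoring f a b c)
    (h : SatisfiesHexRels a b c) {u : Γ} (hu : f u = 0) (hua : f (u * a) = 0) :
    f (u * b) = 1 ∧ f (u * b * a) = 2 ∧ f (u * b * c) = 2 ∧ f (u * c * a) = 2 ∧
      f (u * a * c * b) = 2 := by
  have cancel_a := mul_mul_cancel_of_mul_self h.mul_self_left
  have cancel_b := mul_mul_cancel_of_mul_self h.mul_self_mid
  have cancel_c := mul_mul_cancel_of_mul_self h.mul_self_right
  obtain ⟨hub, huc⟩ : f (u * b) = 1 ∧ f (u * c) = 1 := by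
    have := hf u
    rw [hua, hu] at this
    exact nbrColors_zero_of_left_eq_zero this
  have huac : f (u * a * c) = 1 := by
    have := hf (u * a)
    rw [cancel_a, hu, hua] at this
    exact (nbrColors_zero_of_left_eq_zero this).2
  obtain ⟨huba, hubc⟩ : f (u * b * a) = 2 ∧ f (u * b * c) = 2 := by
    have := hf (u * b)
    rw [cancel_b, hu, hub] at this
    exact nbrColors_one_of_mid_eq_zero this
  have huca : f (u * c * a) = 2 := by
    have := hf (u * c)
    rw [cancel_c, hu, huc] at this
    exact (nbrColors_one_of_right_eq_zero this).1
  have huacb : f (u * a * c * b) = 2 := by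
    have := hf (u * a * c)
    rw [cancel_c, hua, huac] at this
    exact (nbrColors_one_of_right_eq_zero this).2
  exact ⟨hub, huba, hubc, huca, huacb⟩

theorem IsNbrColoring.apply_mul_ne_zero (hf : IsNbrColoring f a b c) (h : SatisfiesHexRels a b c)
    {u : Γ} (hu : f u = 0) : f (u * a) ≠ 0 := by
  intro hua
  obtain ⟨hub, huba, hubc, huca, huacb⟩ := hf.colors_around_zero_edge h hu hua
  have cancel_a := mul_mul_cancel_of_mul_self h.mul_self_left
  have cancel_b := mul_mul_cancel_of_mul_self h.mul_self_mid
  have cancel_c := mul_mul_cancel_of_mul_self h.mul_self_right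
  have hubcb : f (u * b * c * b) = 1 := by
    have := hf (u * b * c)
    have e : u * b * c * a = u * a * c * b := by
      simp only [mul_assoc, h.rotate.mul_mul_comm]
    rw [cancel_c, e, huacb, hub, hubc] at this
    exact (nbrColors_two_of_left_eq_two this).1
  have hubac : f (u * b * a * c) = 1 := by
    have := hf (u * b * a * c)
    have e : u * b * a * c * b = u * c * a :=
      calc u * b * a * c * b = u * (b * a * c) * b := by simp only [mul_assoc]
        _ = u * c * a := by
          rw [← h.rotate.rotate.mul_mul_comm, ← mul_assoc, cancel_b, mul_assoc]
    rw [cancel_c, e, huba, huca] at this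
    exact eq_one_of_nbrColors_mid_right_eq_two this
  have hubab : f (u * b * a * b) = 2 := by
    have := hf (u * b * a)
    rw [cancel_a, hub, hubac, huba] at this
    exact nbrColors_two_of_left_right_eq_one this
  have hubabc : f (u * b * a * b * c) = 1 := by
    have := hf (u * b * a * b)
    rw [cancel_b, huba, hubab] at this
    exact (nbrColors_two_of_mid_eq_two this).2
  have := hf (u * b * c * b)
  have e : u * b * c * b * a = u * b * a * b * c := by
    simp only [mul_assoc, h.mul_mul_comm]
  rw [cancel_b, e, hubabc, hubc, hubcb] at this
  exact nbrColors_one_ne_of_left_eq_one this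

theorem IsNbrColoring.apply_ne_zero (hf : IsNbrColoring f a b c) (h : SatisfiesHexRels a b c)
    (u : Γ) : f u ≠ 0 := by
  intro hu
  have h0 : (0 : Fin 3) ∈ nbrColors (f u) := by rw [hu]; decide
  rcases hf.exists_nbr_eq h0 with hua | hub | huc
  · exact hf.apply_mul_ne_zero h hu hua
  · exact hf.rotate.apply_mul_ne_zero h.rotate hu hub
  · exact hf.rotate.rotate.apply_mul_ne_zero h.rotate.rotate hu huc

theorem SatisfiesHexRels.not_isNbrColoring (h : SatisfiesHexRels a b c) (f : Γ → Fin 3) :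
    ¬ IsNbrColoring f a b c := by
  intro hf
  have hne_one (u : Γ) : f u ≠ 1 := by
    intro hu
    have h0 : (0 : Fin 3) ∈ nbrColors (f u) := by rw [hu]; decide
    rcases hf.exists_nbr_eq h0 with h' | h' | h' <;> exact hf.apply_ne_zero h _ h'
  have hne_two (u : Γ) : f u ≠ 2 := by
    intro hu
    have h1 : (1 : Fin 3) ∈ nbrColors (f u) := by rw [hu]; decide
    rcases hf.exists_nbr_eq h1 with h' | h' | h' <;> exact hne_one _ h'
  have := hf.apply_ne_zero h 1
  have := hne_one 1
  have := hne_two 1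
  omega

end

def kleinGen : Fin 3 → Multiplicative (ZMod 2 × ZMod 2) :=
  ![.ofAdd (1, 0), .ofAdd (0, 1), .ofAdd (1, 1)]

theorem kleinGen_satisfies_hexRels : ∀ r ∈ hexRels, FreeGroup.lift kleinGen r = 1 := by
  simp only [hexRels, Set.mem_insert_iff, Set.mem_singleton_iff]
  rintro r (rfl | rfl | rfl | rfl) <;> simp only [map_mul, FreeGroup.lift_apply_of] <;> decide

def toKlein : G →* Multiplicative (ZMod 2 × ZMod 2) :=
  PresentedGroup.toGroup kleinGen_satisfies_hexRels

theorem toKlein_gen (i : Fin 3) : toKlein (gen i) = kleinGen i :=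
  PresentedGroup.toGroup.of kleinGen_satisfies_hexRels

theorem gen_injective : Function.Injective gen := fun i j hij =>
  (by decide : Function.Injective kleinGen) (by rw [← toKlein_gen, ← toKlein_gen, hij])

theorem gen_ne_one (i : Fin 3) : gen i ≠ 1 := fun hi =>
  (by decide : ∀ i, kleinGen i ≠ 1) i (by rw [← toKlein_gen, hi, map_one])

theorem H_adj_iff {u v : G} : H.Adj u v ↔ ∃ i, v = u * gen i := by
  refine ⟨fun huv => huv.2, fun ⟨i, hv⟩ => ⟨?_, i, hv⟩⟩
  rw [hv, ne_eq, left_eq_mul]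
  exact gen_ne_one i

theorem ncard_adj_eq_count {α : Type*} [DecidableEq α] (φ : G → α) (u : G) (j : α) :
    {v | H.Adj u v ∧ φ v = j}.ncard = ({φ (u * x), φ (u * y), φ (u * z)} : Multiset α).count j := by
  have himage : {v | H.Adj u v ∧ φ v = j} = (u * gen ·) '' {i | φ (u * gen i) = j} := by
    ext v
    simp only [H_adj_iff, Set.mem_ofPred_eq, Set.mem_image]
    constructor
    · rintro ⟨⟨i, rfl⟩, hv⟩
      exact ⟨i, hv, rfl⟩
    · rintro ⟨i, hi, rfl⟩
      exact ⟨⟨i, rfl⟩, hi⟩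
  rw [himage, Set.ncard_image_of_injective _ fun i i' h => gen_injective (mul_left_cancel h),
    Set.ncard_eq_toFinset_card', Set.toFinset_ofPred, Finset.card_filter, Fin.sum_univ_three]
  simp only [x, y, z, Multiset.insert_eq_cons, Multiset.count_cons, Multiset.count_singleton,
    eq_comm (a := j)]
  ring

theorem satisfiesHexRels_xyz : SatisfiesHexRels x y z where
  mul_self_left := gen_mul_self 0
  mul_self_mid := gen_mul_self 1
  mul_self_right := gen_mul_self 2
  mul_mul_comm := by
    have hsq : x * y * z * (x * y * z) = 1 :=
      (QuotientGroup.eq_one_iff _).mpr (Subgroup.subset_normalClosure (by simp [hexRels]))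
    have hinv (i : Fin 3) : (gen i)⁻¹ = gen i := inv_eq_of_mul_eq_one_right (gen_mul_self i)
    calc x * y * z = (x * y * z)⁻¹ := (inv_eq_of_mul_eq_one_right hsq).symm
      _ = z * y * x := by rw [mul_inv_rev, mul_inv_rev, x, y, z, hinv, hinv, hinv, mul_assoc]

theorem IsPerfectColoring.isNbrColoring {φ : G → Fin 3}
    (hφ : IsPerfectColoring φ !![1,2,0;1,0,2;0,2,1]) : IsNbrColoring φ x y z := fun u => by
  ext j
  rw [count_nbrColors, ← hφ u j, ncard_adj_eq_count]

/-- The array `[12-102-21]` is infeasible: there is no perfect coloring of `H` with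
parameter matrix `[[1,2,0],[1,0,2],[0,2,1]]`. -/
theorem no_coloring_12_102_21 :
    ¬ ∃ φ : G → Fin 3, IsPerfectColoring φ !![1,2,0;1,0,2;0,2,1] := by
  rintro ⟨φ, hφ⟩
  exact satisfiesHexRels_xyz.not_isNbrColoring φ hφ.isNbrColoring

end HexGrid
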